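/- For y > 0, I(y) ≤ sqrt(c₂ · sqrt(π/(2y)) · erf(sqrt(2y))) - Ei(-y)/4, where c₂ = ∫_0^1 (ψ(t+1) - log t)^2 dt and I(y) = ∫_0^∞ (ψ(t+1) - log t) e^{-y t^2} dt. -/

import Mathlib

/-!
Split the integral at `t = 1`. Log-convexity of `Γ` and `Γ (x + 1) = x Γ x` give
`log t ≤ ψ (t + 1) ≤ log (t + 1)`. To sharpen the upper bound, `log (1 + 1/s) ≤ (1/s + 1/(s+1)) / 2`
(that is, `u ≤ sinh u`) makes `ψ (t + 1) - log t - 1/(2t)` nondecreasing along `t, t + 1, …`,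
while at `t + n` it is at most `1/(2(t + n)) → 0`; hence `0 ≤ ψ (t + 1) - log t ≤ 1/(2t)`.
On `(1, ∞)` this bounds the integral by `∫₁^∞ e^{-yt²}/(2t) dt`, which the substitution `u = y t²`
turns into `-Ei(-y)/4`. On `(0, 1)`, where `ψ (t + 1) - log t = O(t^{-1/4})` is square integrable,
Cauchy–Schwarz applies, with `∫₀¹ e^{-2yt²} dt = ½ √(π/(2y)) erf √(2y)`.
-/

open Real MeasureTheory Filter

/-- The digamma function: logarithmic derivative of the Gamma function. -/
noncomputable def digamma (x : ℝ) : ℝ := deriv (fun y => Real.log (Real.Gamma y)) x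
/-- The error function. -/
noncomputable def erf (x : ℝ) : ℝ := (2 / Real.sqrt π) * ∫ t in (0:ℝ)..x, Real.exp (-t ^ 2)
/-- The exponential integral. -/
noncomputable def Ei (x : ℝ) : ℝ := -∫ t in Set.Ioi (-x), Real.exp (-t) / t

open Set Topology

lemma differentiableAt_log_Gamma {x : ℝ} (hx : 0 < x) :
    DifferentiableAt ℝ (fun y => log (Gamma y)) x := by
  refine (differentiableAt_Gamma ?_).log (Gamma_ne_zero ?_) <;>
    exact fun m => ne_of_gt (by linarith [m.cast_nonneg (α := ℝ)])

lemma log_Gamma_add_one {x : ℝ} (hx : 0 < x) :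
    log (Gamma (x + 1)) = log (Gamma x) + log x := by
  rw [Gamma_add_one hx.ne', log_mul hx.ne' (Gamma_pos_of_pos hx).ne', add_comm]

lemma digamma_add_one {x : ℝ} (hx : 0 < x) : digamma (x + 1) = digamma x + x⁻¹ := by
  have h : (fun y => log (Gamma (y + 1))) =ᶠ[𝓝 x] fun y => log (Gamma y) + log y := by
    filter_upwards [eventually_gt_nhds hx] with y hy using log_Gamma_add_one hy
  rw [digamma, digamma, ← deriv_comp_add_const, h.deriv_eq,
    deriv_fun_add (differentiableAt_log_Gamma hx) (differentiableAt_log hx.ne'), deriv_log]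

lemma log_le_digamma_add_one {x : ℝ} (hx : 0 < x) : log x ≤ digamma (x + 1) := by
  have h := convexOn_log_Gamma.slope_le_deriv (mem_Ioi.2 hx) (mem_Ioi.2 (by linarith))
    (lt_add_one x) (differentiableAt_log_Gamma (by linarith : 0 < x + 1))
  rwa [slope_def_field, add_sub_cancel_left, div_one, Function.comp_apply, Function.comp_apply,
    log_Gamma_add_one hx, add_sub_cancel_left] at h

lemma digamma_le_log {x : ℝ} (hx : 0 < x) : digamma x ≤ log x := by
  have h := convexOn_log_Gamma.deriv_le_slope (mem_Ioi.2 hx) (mem_Ioi.2 (by linarith))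
    (lt_add_one x) (differentiableAt_log_Gamma hx)
  rwa [slope_def_field, add_sub_cancel_left, div_one, Function.comp_apply, Function.comp_apply,
    log_Gamma_add_one hx, add_sub_cancel_left] at h

lemma log_le_half_sub_inv {z : ℝ} (hz : 1 ≤ z) : log z ≤ (z - z⁻¹) / 2 := by
  rw [← sinh_log (by linarith)]
  exact self_le_sinh_iff.2 (log_nonneg hz)

lemma log_add_one_sub_log_le {s : ℝ} (hs : 0 < s) :
    log (s + 1) - log s ≤ (s⁻¹ + (s + 1)⁻¹) / 2 := by
  have h := log_le_half_sub_inv (z := (s + 1) / s) (by rw [le_div_iff₀ hs]; linarith)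
  rw [log_div (by positivity) hs.ne'] at h
  convert h using 2
  field_simp
  ring

lemma digamma_add_one_sub_log_le_inv {s : ℝ} (hs : 0 < s) :
    digamma (s + 1) - log s ≤ s⁻¹ := by
  have hψ := digamma_le_log (by linarith : 0 < s + 1)
  have hlog := log_le_sub_one_of_pos (by positivity : 0 < (s + 1) / s)
  rw [log_div (by positivity) hs.ne', add_div, div_self hs.ne', one_div] at hlog
  linarith

lemma digamma_add_one_sub_log_sub_half_inv_le {s : ℝ} (hs : 0 < s) :
    digamma (s + 1) - log s - (2 * s)⁻¹ ≤
      digamma (s + 1 + 1) - log (s + 1) - (2 * (s + 1))⁻¹ := by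
  have hψ := digamma_add_one (by linarith : 0 < s + 1)
  have hlog := log_add_one_sub_log_le hs
  rw [mul_inv, mul_inv]
  linarith

lemma digamma_add_one_sub_log_le_half_inv {t : ℝ} (ht : 0 < t) :
    digamma (t + 1) - log t ≤ (2 * t)⁻¹ := by
  set g : ℕ → ℝ := fun n => digamma (t + n + 1) - log (t + n) - (2 * (t + n))⁻¹ with hg
  have hmono : Monotone g := monotone_nat_of_le_succ fun n => by
    simpa only [hg, Nat.cast_succ, add_assoc] using
      digamma_add_one_sub_log_sub_half_inv_le (by positivity : 0 < t + n)
  have hle (n : ℕ) : g n ≤ (2 * (t + n))⁻¹ := by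
    have := digamma_add_one_sub_log_le_inv (by positivity : 0 < t + n)
    simp only [hg, mul_inv] at this ⊢
    linarith
  have hlim : Tendsto (fun n : ℕ => (2 * (t + n))⁻¹) atTop (𝓝 0) :=
    ((tendsto_atTop_add_const_left _ t tendsto_natCast_atTop_atTop).const_mul_atTop
      two_pos).inv_tendsto_atTop
  simpa [hg] using ge_of_tendsto' hlim fun n => (hmono n.zero_le).trans (hle n)

lemma digamma_add_one_sub_log_le_rpow {t : ℝ} (ht0 : 0 < t) (ht1 : t ≤ 1) :
    digamma (t + 1) - log t ≤ 5 * t ^ (-(1 / 4) : ℝ) := by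
  have hψ := digamma_le_log (by linarith : 0 < t + 1)
  have hlog_succ : log (t + 1) ≤ 1 := by
    linarith [log_le_sub_one_of_pos (by linarith : 0 < t + 1)]
  have hlog : -log t ≤ 4 * t ^ (-(1 / 4) : ℝ) := by
    have h := log_le_rpow_div (x := t⁻¹) (by positivity) (by norm_num : (0 : ℝ) < 1 / 4)
    rw [log_inv, inv_rpow ht0.le, ← rpow_neg ht0.le] at h
    linarith
  have hone : 1 ≤ t ^ (-(1 / 4) : ℝ) :=
    one_le_rpow_of_pos_of_le_one_of_nonpos ht0 ht1 (by norm_num)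
  linarith

lemma measurable_digamma_add_one_sub_log : Measurable fun t => digamma (t + 1) - log t :=
  ((measurable_deriv _).comp (measurable_add_const 1)).sub measurable_log

lemma memLp_two_digamma_add_one_sub_log :
    MemLp (fun t => digamma (t + 1) - log t) 2 (volume.restrict (Ioo 0 1)) := by
  have hmeas := measurable_digamma_add_one_sub_log
  rw [memLp_two_iff_integrable_sq hmeas.aestronglyMeasurable]
  refine Integrable.mono' (((intervalIntegral.intervalIntegrable_rpow' (r := -(1 / 2))
    (by norm_num)).1.mono_set Ioo_subset_Ioc_self).const_mul 25)
    (hmeas.pow_const 2).aestronglyMeasurable ?_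
  refine (ae_restrict_iff' measurableSet_Ioo).2 (ae_of_all _ fun t ⟨ht0, ht1⟩ => ?_)
  have hnonneg := sub_nonneg.2 (log_le_digamma_add_one ht0)
  rw [norm_pow, Real.norm_of_nonneg hnonneg]
  calc (digamma (t + 1) - log t) ^ 2 ≤ (5 * t ^ (-(1 / 4) : ℝ)) ^ 2 :=
        pow_le_pow_left₀ hnonneg (digamma_add_one_sub_log_le_rpow ht0 ht1.le) 2
    _ = 25 * t ^ (-(1 / 2) : ℝ) := by
        rw [mul_pow, ← rpow_natCast (t ^ _) 2, ← rpow_mul ht0.le]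
        norm_num

lemma memLp_two_exp_neg_mul_sq {b : ℝ} (hb : 0 < b) :
    MemLp (fun t => exp (-b * t ^ 2)) 2 := by
  rw [memLp_two_iff_integrable_sq (by fun_prop)]
  convert integrable_exp_neg_mul_sq (by positivity : 0 < 2 * b) using 2 with t
  rw [← exp_nat_mul]
  ring_nf

lemma integral_mul_le_sqrt_mul_sqrt {α : Type*} [MeasurableSpace α] {μ : Measure α}
    {f g : α → ℝ} (hf : MemLp f 2 μ) (hg : MemLp g 2 μ) :
    ∫ a, f a * g a ∂μ ≤ √(∫ a, f a ^ 2 ∂μ) * √(∫ a, g a ^ 2 ∂μ) := by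
  have hHolder := integral_mul_le_Lp_mul_Lq_of_nonneg HolderConjugate.two_two
    (ae_of_all μ fun a => abs_nonneg (f a)) (ae_of_all μ fun a => abs_nonneg (g a))
    (by rw [ENNReal.ofReal_ofNat]; exact hf.abs) (by rw [ENNReal.ofReal_ofNat]; exact hg.abs)
  calc ∫ a, f a * g a ∂μ ≤ ∫ a, |f a| * |g a| ∂μ :=
        integral_mono (hf.integrable_mul hg) (hf.abs.integrable_mul hg.abs)
          fun a => (le_abs_self _).trans (abs_mul _ _).le
    _ ≤ √(∫ a, f a ^ 2 ∂μ) * √(∫ a, g a ^ 2 ∂μ) := by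
        simpa only [rpow_two, sq_abs, ← sqrt_eq_rpow] using hHolder

lemma erf_nonneg {x : ℝ} (hx : 0 ≤ x) : 0 ≤ erf x :=
  mul_nonneg (by positivity)
    (intervalIntegral.integral_nonneg hx fun u _ => (exp_pos _).le)

lemma integral_Ioo_zero_one_exp_neg_mul_sq {b : ℝ} (hb : 0 < b) :
    ∫ t in Ioo (0 : ℝ) 1, exp (-b * t ^ 2) = √(π / b) / 2 * erf √b := by
  have hsq (t : ℝ) : exp (-b * t ^ 2) = exp (-(√b * t) ^ 2) := by
    rw [mul_pow, sq_sqrt hb.le, neg_mul]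
  simp_rw [← integral_Ioc_eq_integral_Ioo, ← intervalIntegral.integral_of_le zero_le_one, hsq]
  rw [intervalIntegral.integral_comp_mul_left (fun u => exp (-u ^ 2)) (sqrt_pos.2 hb).ne',
    mul_zero, mul_one, erf, sqrt_div' _ hb.le, smul_eq_mul]
  have : √π ≠ 0 := (sqrt_pos.2 pi_pos).ne'
  field_simp

lemma image_mul_sq_Ioi_one {y : ℝ} (hy : 0 < y) : (fun t => y * t ^ 2) '' Ioi 1 = Ioi y := by
  ext u
  constructor
  · rintro ⟨t, ht, rfl⟩
    exact lt_mul_right hy (one_lt_pow₀ ht two_ne_zero)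
  · intro hu
    have hu' : 1 < u / y := (one_lt_div hy).2 hu
    refine ⟨√(u / y), lt_sqrt_of_sq_lt (by simpa using hu'), ?_⟩
    change y * √(u / y) ^ 2 = u
    rw [sq_sqrt (by positivity), mul_div_cancel₀ _ hy.ne']

lemma integral_Ioi_one_inv_mul_exp_neg_mul_sq {y : ℝ} (hy : 0 < y) :
    ∫ t in Ioi 1, (2 * t)⁻¹ * exp (-y * t ^ 2) = -Ei (-y) / 4 := by
  have hderiv (t : ℝ) (_ : t ∈ Ioi (1 : ℝ)) :
      HasDerivWithinAt (fun t => y * t ^ 2) (2 * y * t) (Ioi 1) t := by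
    refine ((hasDerivAt_pow 2 t).const_mul y).hasDerivWithinAt.congr_deriv ?_
    push_cast
    ring
  have hinj : InjOn (fun t : ℝ => y * t ^ 2) (Ioi 1) := fun a ha b hb hab =>
    (pow_left_inj₀ (by linarith [mem_Ioi.1 ha]) (by linarith [mem_Ioi.1 hb]) two_ne_zero).1
      (mul_left_cancel₀ hy.ne' hab)
  have hsubst := integral_image_eq_integral_abs_deriv_smul measurableSet_Ioi hderiv hinj
    fun u => exp (-u) / u
  rw [image_mul_sq_Ioi_one hy] at hsubst
  have hintegrand : EqOn (fun t => |2 * y * t| • (exp (-(y * t ^ 2)) / (y * t ^ 2)))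
      (fun t => 4 * ((2 * t)⁻¹ * exp (-y * t ^ 2))) (Ioi 1) := by
    intro t ht
    have ht0 : 0 < t := by linarith [mem_Ioi.1 ht]
    simp only [smul_eq_mul, abs_of_pos (by positivity : 0 < 2 * y * t), neg_mul]
    field_simp
    ring
  rw [setIntegral_congr_fun measurableSet_Ioi hintegrand, integral_const_mul] at hsubst
  simp only [Ei, neg_neg]
  rw [hsubst]
  ring

lemma integrableOn_Ioi_one_inv_mul_exp_neg_mul_sq {y : ℝ} (hy : 0 < y) :
    IntegrableOn (fun t => (2 * t)⁻¹ * exp (-y * t ^ 2)) (Ioi 1) := by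
  refine ((integrable_exp_neg_mul_sq hy).integrableOn.const_mul 2⁻¹).mono' (by fun_prop) ?_
  refine (ae_restrict_iff' measurableSet_Ioi).2 (ae_of_all _ fun t (ht : 1 < t) => ?_)
  rw [norm_mul, norm_inv, Real.norm_of_nonneg (by linarith), Real.norm_of_nonneg (exp_pos _).le]
  gcongr
  linarith

lemma integrableOn_Ioi_one_digamma_add_one_sub_log_mul_exp {y : ℝ} (hy : 0 < y) :
    IntegrableOn (fun t => (digamma (t + 1) - log t) * exp (-y * t ^ 2)) (Ioi 1) := by
  refine (integrableOn_Ioi_one_inv_mul_exp_neg_mul_sq hy).mono'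
    (measurable_digamma_add_one_sub_log.mul (by fun_prop)).aestronglyMeasurable ?_
  refine (ae_restrict_iff' measurableSet_Ioi).2 (ae_of_all _ fun t (ht : 1 < t) => ?_)
  have ht0 : 0 < t := by linarith
  rw [norm_mul, Real.norm_of_nonneg (sub_nonneg.2 (log_le_digamma_add_one ht0)),
    Real.norm_of_nonneg (exp_pos _).le]
  gcongr
  exact digamma_add_one_sub_log_le_half_inv ht0

lemma integral_Ioo_zero_one_digamma_add_one_sub_log_mul_exp_le {y : ℝ} (hy : 0 < y) :
    ∫ t in Ioo (0 : ℝ) 1, (digamma (t + 1) - log t) * exp (-y * t ^ 2) ≤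
      √((∫ t in Ioo (0 : ℝ) 1, (digamma (t + 1) - log t) ^ 2) * √(π / (2 * y)) * erf √(2 * y)) := by
  set f : ℝ → ℝ := fun t => digamma (t + 1) - log t
  set g : ℝ → ℝ := fun t => exp (-y * t ^ 2)
  have hg_sq : ∫ t in Ioo (0 : ℝ) 1, g t ^ 2 = √(π / (2 * y)) / 2 * erf √(2 * y) := by
    have hsq (t : ℝ) : g t ^ 2 = exp (-(2 * y) * t ^ 2) := by
      rw [← exp_nat_mul]
      ring_nf
    simp_rw [hsq]
    exact integral_Ioo_zero_one_exp_neg_mul_sq (by positivity)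
  calc ∫ t in Ioo (0 : ℝ) 1, f t * g t
      ≤ √(∫ t in Ioo (0 : ℝ) 1, f t ^ 2) * √(∫ t in Ioo (0 : ℝ) 1, g t ^ 2) :=
        integral_mul_le_sqrt_mul_sqrt memLp_two_digamma_add_one_sub_log
          ((memLp_two_exp_neg_mul_sq hy).restrict _)
    _ ≤ √(∫ t in Ioo (0 : ℝ) 1, f t ^ 2) * √(√(π / (2 * y)) * erf √(2 * y)) := by
        rw [hg_sq]
        gcongr
        · exact erf_nonneg (sqrt_nonneg _)
        · linarith [sqrt_nonneg (π / (2 * y))]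
    _ = _ := by rw [← sqrt_mul (integral_nonneg fun t => sq_nonneg (f t)), mul_assoc]

lemma integral_Ioi_one_digamma_add_one_sub_log_mul_exp_le {y : ℝ} (hy : 0 < y) :
    ∫ t in Ioi (1 : ℝ), (digamma (t + 1) - log t) * exp (-y * t ^ 2) ≤ -Ei (-y) / 4 := by
  rw [← integral_Ioi_one_inv_mul_exp_neg_mul_sq hy]
  exact setIntegral_mono_on (integrableOn_Ioi_one_digamma_add_one_sub_log_mul_exp hy)
    (integrableOn_Ioi_one_inv_mul_exp_neg_mul_sq hy) measurableSet_Ioi fun t (ht : 1 < t) =>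
      mul_le_mul_of_nonneg_right (digamma_add_one_sub_log_le_half_inv (by linarith)) (exp_pos _).le

theorem hardy_integral_upper_bound (y : ℝ) (hy : 0 < y) :
    (∫ t in Set.Ioi (0 : ℝ), (digamma (t + 1) - Real.log t) * Real.exp (-y * t ^ 2)) ≤
      Real.sqrt ((∫ t in Set.Ioo (0 : ℝ) 1, (digamma (t + 1) - Real.log t) ^ 2) *
          Real.sqrt (π / (2 * y)) * erf (Real.sqrt (2 * y))) - Ei (-y) / 4 := by
  have hint : IntegrableOn (fun t => (digamma (t + 1) - log t) * exp (-y * t ^ 2)) (Ioc 0 1) :=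
    (integrableOn_Ioc_iff_integrableOn_Ioo).2 <| memLp_two_digamma_add_one_sub_log.integrable_mul
      ((memLp_two_exp_neg_mul_sq hy).restrict _)
  rw [← Ioc_union_Ioi_eq_Ioi zero_le_one, setIntegral_union (Ioc_disjoint_Ioi le_rfl)
    measurableSet_Ioi hint (integrableOn_Ioi_one_digamma_add_one_sub_log_mul_exp hy),
    integral_Ioc_eq_integral_Ioo]
  linarith [integral_Ioo_zero_one_digamma_add_one_sub_log_mul_exp_le hy,
    integral_Ioi_one_digamma_add_one_sub_log_mul_exp_le hy]
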